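/- For α > 0, the operator Λ_α defined by (Λ_α p)(x) = x p'(x) + (α − x) p(x) is real zero increasing: for every real polynomial p, the number of real zeros (with multiplicity) of Λ_α p is strictly greater than the number of real zeros of p. -/

import Mathlib

/-!
Put `w(x) = |x|^α e^{-x}`. For `x ≠ 0` one computes `(w p)'(x) = w(x) (Λ_α p)(x) / x`, and since
`α > 0` the function `w p` is continuous on `ℝ` and vanishes at `0` as well as at every root of `p`.
Let `s` be the set of distinct roots of `p` together with `0`. Rolle's theorem gives a root of
`Λ_α p` strictly between any two consecutive points of `s` (the singularity `0` being one of them),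
and, as `w p → 0` at `+∞`, one more root beyond `max s`: this yields `#s` roots of `Λ_α p` outside
`s`. At a point of `s`, a root of `p` of multiplicity `m` is a root of `Λ_α p` of multiplicity at
least `m - 1`, and of multiplicity at least `m` at the point `0`; counting gives at least
`#p.roots - (#s - 1) + #s` roots of `Λ_α p`.
-/

open Polynomial Filter Set Topology Asymptotics

theorem Finset.card_le_card_sdiff_of_forall_exists_between {α : Type*} [LinearOrder α]
    {s t : Finset α} (h : ∀ x ∈ s, ∃ z ∈ t, x < z ∧ ∀ y ∈ s, x < y → z < y) :
    s.card ≤ (t \ s).card := by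
  choose! f hft hxf hfy using h
  refine card_le_card_of_injOn f
    (fun x hx => mem_sdiff.2 ⟨hft x hx, fun hfx => lt_irrefl _ (hfy x hx _ hfx (hxf x hx))⟩)
    fun x hx x' hx' hxx' => ?_
  by_contra hne
  rcases lt_or_gt_of_ne hne with hlt | hlt
  · exact lt_asymm (hfy x hx x' hx' hlt) (hxx' ▸ hxf x' hx')
  · exact lt_asymm (hfy x' hx' x hx hlt) (hxx' ▸ hxf x hx)

theorem Multiset.sum_count_add_card_toFinset_sdiff_le {α : Type*} [DecidableEq α]
    (m : Multiset α) (s : Finset α) :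
    ∑ x ∈ s, m.count x + (m.toFinset \ s).card ≤ Multiset.card m :=
  calc ∑ x ∈ s, m.count x + (m.toFinset \ s).card
      ≤ ∑ x ∈ s, m.count x + ∑ x ∈ m.toFinset \ s, m.count x := by
        rw [Finset.card_eq_sum_ones]
        gcongr with x hx
        exact Multiset.count_pos.2 (Multiset.mem_toFinset.1 (Finset.mem_sdiff.1 hx).1)
    _ = ∑ x ∈ s ∪ m.toFinset, m.count x := by
        rw [← Finset.sum_union Finset.disjoint_sdiff, Finset.union_sdiff_self_eq_union]
    _ = Multiset.card m :=
        Multiset.sum_count_eq_card fun _ ha => Finset.mem_union_right _ (Multiset.mem_toFinset.2 ha)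

theorem exists_hasDerivAt_eq_zero_of_tendsto_atTop {f f' : ℝ → ℝ} {a : ℝ}
    (hfc : ContinuousOn f (Ici a)) (hlim : Tendsto f atTop (𝓝 (f a)))
    (hff' : ∀ x ∈ Ioi a, HasDerivAt f (f' x) x) : ∃ c ∈ Ioi a, f' c = 0 := by
  by_cases hconst : ∀ x ∈ Ioi a, f x = f a
  · have ha1 : a < a + 1 := lt_add_one a
    refine ⟨a + 1, ha1, (hff' _ ha1).unique ?_⟩
    refine (hasDerivAt_const _ (f a)).congr_of_eventuallyEq ?_
    filter_upwards [Ioi_mem_nhds ha1] with x hx using hconst x hx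
  push Not at hconst
  obtain ⟨b, hab, hfb⟩ := hconst
  wlog hlt : f a < f b generalizing f f'
  · obtain ⟨c, hc, hc'⟩ := this (f := -f) (f' := -f') hfc.neg hlim.neg
      (fun x hx => (hff' x hx).neg) (neg_injective.ne hfb)
      (neg_lt_neg (hfb.lt_of_le (not_lt.1 hlt)))
    exact ⟨c, hc, neg_eq_zero.1 hc'⟩
  obtain ⟨M, hfM, hbM⟩ :=
    ((hlim.eventually (gt_mem_nhds hlt)).and (eventually_gt_atTop b)).exists
  obtain ⟨c, hc, hmax⟩ := isCompact_Icc.exists_isMaxOn (nonempty_Icc.2 (hab.le.trans hbM.le))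
    (hfc.mono Icc_subset_Ici_self)
  have hbc : f b ≤ f c := hmax ⟨hab.le, hbM.le⟩
  have hac : a < c := hc.1.lt_of_ne (by rintro rfl; linarith)
  have hcM : c < M := hc.2.lt_of_ne (by rintro rfl; linarith)
  exact ⟨c, hac, (hmax.isLocalMax (Icc_mem_nhds hac hcM)).hasDerivAt_eq_zero (hff' c hac)⟩

theorem hasDerivAt_abs_rpow_of_ne_zero (α : ℝ) {x : ℝ} (hx : x ≠ 0) :
    HasDerivAt (fun y : ℝ => |y| ^ α) (α * |x| ^ α / x) x := by
  convert (hasDerivAt_abs hx).rpow_const (p := α) (Or.inl (abs_ne_zero.mpr hx)) using 1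
  rw [Real.rpow_sub_one (abs_ne_zero.mpr hx)]
  field_simp
  rw [mul_assoc, self_mul_sign]

namespace Polynomial

noncomputable def laguerreShift (α : ℝ) (p : ℝ[X]) : ℝ[X] :=
  X * derivative p + (C α - X) * p

variable {α : ℝ} {p : ℝ[X]}

theorem coeff_laguerreShift_natDegree_succ :
    (laguerreShift α p).coeff (p.natDegree + 1) = -p.leadingCoeff := by
  rw [laguerreShift, coeff_add, coeff_X_mul, coeff_derivative, sub_mul, coeff_sub, coeff_C_mul,
    coeff_X_mul, coeff_natDegree_succ_eq_zero, leadingCoeff]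
  ring

theorem laguerreShift_ne_zero (hp : p ≠ 0) : laguerreShift α p ≠ 0 := fun h => by
  simpa [h, hp] using (coeff_laguerreShift_natDegree_succ (α := α) (p := p)).symm

theorem rootMultiplicity_le_rootMultiplicity_laguerreShift_add_one (hp : p ≠ 0) (x : ℝ) :
    p.rootMultiplicity x ≤ (laguerreShift α p).rootMultiplicity x + 1 := by
  have hdvd := pow_rootMultiplicity_dvd p x
  have : p.rootMultiplicity x - 1 ≤ (laguerreShift α p).rootMultiplicity x :=
    (le_rootMultiplicity_iff (laguerreShift_ne_zero hp)).2 <|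
      dvd_add (dvd_mul_of_dvd_right (pow_sub_one_dvd_derivative_of_pow_dvd hdvd) _)
        (dvd_mul_of_dvd_right ((pow_dvd_pow _ (Nat.sub_le _ 1)).trans hdvd) _)
  omega

theorem rootMultiplicity_zero_le_rootMultiplicity_laguerreShift (hp : p ≠ 0) :
    p.rootMultiplicity 0 ≤ (laguerreShift α p).rootMultiplicity 0 := by
  have hdvd : X ^ p.rootMultiplicity 0 ∣ p := by simpa using pow_rootMultiplicity_dvd p 0
  have hXdvd : X ^ p.rootMultiplicity 0 ∣ X * derivative p :=
    (pow_dvd_pow X (by omega : _ ≤ p.rootMultiplicity 0 - 1 + 1)).trans <| by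
      rw [pow_succ']
      exact mul_dvd_mul_left X (pow_sub_one_dvd_derivative_of_pow_dvd hdvd)
  have hΛdvd : X ^ p.rootMultiplicity 0 ∣ laguerreShift α p :=
    dvd_add hXdvd (dvd_mul_of_dvd_right hdvd _)
  exact (le_rootMultiplicity_iff (laguerreShift_ne_zero hp)).2 (by simpa using hΛdvd)

noncomputable def laguerreWeighted (α : ℝ) (p : ℝ[X]) (x : ℝ) : ℝ :=
  |x| ^ α * Real.exp (-x) * p.eval x

theorem tendsto_laguerreWeighted_atTop (α : ℝ) (p : ℝ[X]) :
    Tendsto (laguerreWeighted α p) atTop (𝓝 0) := by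
  have hp : (fun x => p.eval x) =O[atTop] fun x => (X ^ p.natDegree : ℝ[X]).eval x :=
    isBigO_atTop_of_degree_le _ _ (by simp [degree_le_natDegree])
  have hlim : Tendsto (fun x : ℝ => x ^ (α + p.natDegree) * Real.exp (-1 * x)) atTop (𝓝 0) :=
    tendsto_rpow_mul_exp_neg_mul_atTop_nhds_zero _ _ one_pos
  refine ((isBigO_refl (fun x : ℝ => |x| ^ α * Real.exp (-x)) atTop).mul hp).trans_tendsto
    (hlim.congr' ?_)
  filter_upwards [eventually_gt_atTop 0] with x hx
  rw [Real.rpow_add hx, Real.rpow_natCast, abs_of_pos hx]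
  simp only [neg_mul, one_mul, eval_pow, eval_X]
  ring

theorem continuous_laguerreWeighted (hα : 0 ≤ α) (p : ℝ[X]) :
    Continuous (laguerreWeighted α p) :=
  ((continuous_abs.rpow_const fun _ => Or.inr hα).mul
    (Real.continuous_exp.comp continuous_neg)).mul p.continuous

theorem laguerreWeighted_eq_zero (hα : 0 < α) {x : ℝ} (hx : x = 0 ∨ p.IsRoot x) :
    laguerreWeighted α p x = 0 := by
  rcases hx with rfl | hx
  · simp [laguerreWeighted, Real.zero_rpow hα.ne']
  · simp [laguerreWeighted, hx.eq_zero]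

theorem hasDerivAt_laguerreWeighted (α : ℝ) (p : ℝ[X]) {x : ℝ} (hx : x ≠ 0) :
    HasDerivAt (laguerreWeighted α p)
      (|x| ^ α * Real.exp (-x) * (laguerreShift α p).eval x / x) x := by
  have hexp : HasDerivAt (fun y : ℝ => Real.exp (-y)) (-Real.exp (-x)) x := by
    simpa using (hasDerivAt_neg x).exp
  refine (((hasDerivAt_abs_rpow_of_ne_zero α hx).mul hexp).mul (p.hasDerivAt x)).congr_deriv ?_
  simp only [laguerreShift, eval_add, eval_mul, eval_X, eval_sub, eval_C, Pi.mul_apply]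
  field_simp
  ring

theorem isRoot_laguerreShift_of_hasDerivAt_laguerreWeighted_zero {x : ℝ} (hx : x ≠ 0)
    (h : HasDerivAt (laguerreWeighted α p) 0 x) : (laguerreShift α p).IsRoot x := by
  simpa [hx, Real.exp_ne_zero, Real.rpow_eq_zero_iff_of_nonneg] using
    (hasDerivAt_laguerreWeighted α p hx).unique h

theorem exists_isRoot_laguerreShift_Ioo (hα : 0 < α) {a b : ℝ} (hab : a < b)
    (ha : a = 0 ∨ p.IsRoot a) (hb : b = 0 ∨ p.IsRoot b) (h0 : (0 : ℝ) ∉ Ioo a b) :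
    ∃ c ∈ Ioo a b, (laguerreShift α p).IsRoot c := by
  have hne : ∀ x ∈ Ioo a b, x ≠ 0 := fun x hx hx0 => h0 (hx0 ▸ hx)
  obtain ⟨c, hc, hc0⟩ := exists_hasDerivAt_eq_zero hab
    (continuous_laguerreWeighted hα.le p).continuousOn
    (by rw [laguerreWeighted_eq_zero hα ha, laguerreWeighted_eq_zero hα hb])
    fun x hx => hasDerivAt_laguerreWeighted α p (hne x hx)
  exact ⟨c, hc, isRoot_laguerreShift_of_hasDerivAt_laguerreWeighted_zero (hne c hc)
    (hc0 ▸ hasDerivAt_laguerreWeighted α p (hne c hc))⟩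

theorem exists_isRoot_laguerreShift_Ioi (hα : 0 < α) {a : ℝ} (ha0 : 0 ≤ a)
    (ha : a = 0 ∨ p.IsRoot a) : ∃ c ∈ Ioi a, (laguerreShift α p).IsRoot c := by
  have hne : ∀ x ∈ Ioi a, x ≠ 0 := fun x hx => (ha0.trans_lt hx).ne'
  obtain ⟨c, hc, hc0⟩ := exists_hasDerivAt_eq_zero_of_tendsto_atTop
    (continuous_laguerreWeighted hα.le p).continuousOn
    (laguerreWeighted_eq_zero hα ha ▸ tendsto_laguerreWeighted_atTop α p)
    fun x hx => hasDerivAt_laguerreWeighted α p (hne x hx)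
  exact ⟨c, hc, isRoot_laguerreShift_of_hasDerivAt_laguerreWeighted_zero (hne c hc)
    (hc0 ▸ hasDerivAt_laguerreWeighted α p (hne c hc))⟩

theorem exists_isRoot_laguerreShift_between (hα : 0 < α) {s : Finset ℝ} (h0 : 0 ∈ s)
    (hs : ∀ x ∈ s, x = 0 ∨ p.IsRoot x) {x : ℝ} (hx : x ∈ s) :
    ∃ z, (laguerreShift α p).IsRoot z ∧ x < z ∧ ∀ y ∈ s, x < y → z < y := by
  by_cases habove : ∃ y ∈ s, x < y
  · obtain ⟨y, hy, hy_le⟩ : ∃ y ∈ s.filter (x < ·), ∀ z ∈ s.filter (x < ·), y ≤ z :=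
      Finset.exists_min_image _ id (by simpa [Finset.Nonempty] using habove)
    rw [Finset.mem_filter] at hy
    have hy_le' : ∀ z ∈ s, x < z → y ≤ z := fun z hz hxz =>
      hy_le z (Finset.mem_filter.2 ⟨hz, hxz⟩)
    obtain ⟨z, hz, hroot⟩ := exists_isRoot_laguerreShift_Ioo hα hy.2 (hs x hx) (hs y hy.1)
      fun h => (hy_le' 0 h0 h.1).not_gt h.2
    exact ⟨z, hroot, hz.1, fun w hw hxw => hz.2.trans_le (hy_le' w hw hxw)⟩
  · push Not at habove
    obtain ⟨z, hz, hroot⟩ := exists_isRoot_laguerreShift_Ioi hα (habove 0 h0) (hs x hx)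
    exact ⟨z, hroot, hz, fun w hw hxw => absurd (habove w hw) hxw.not_ge⟩

end Polynomial

/-- For `α > 0`, the operator `Λ_α p = x p' + (α - x) p` is real zero increasing:
the number of real zeros (with multiplicity) of `Λ_α p` is strictly greater than
the number of real zeros of `p`. -/
theorem stmt_4 (α : ℝ) (hα : 0 < α) (p : Polynomial ℝ) (hp : p ≠ 0) :
    p.roots.card <
      (Polynomial.X * Polynomial.derivative p + (Polynomial.C α - Polynomial.X) * p).roots.card := by
  classical
  change p.roots.card < (laguerreShift α p).roots.card
  set q := laguerreShift α p
  set s := insert 0 p.roots.toFinset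
  have hs : ∀ x ∈ s, x = 0 ∨ p.IsRoot x := by simp [s, hp]
  have hnew : s.card ≤ (q.roots.toFinset \ s).card := by
    refine Finset.card_le_card_sdiff_of_forall_exists_between fun x hx => ?_
    obtain ⟨z, hz, hxz, hz_lt⟩ :=
      exists_isRoot_laguerreShift_between hα (Finset.mem_insert_self 0 _) hs hx
    exact ⟨z, Multiset.mem_toFinset.2 ((mem_roots (laguerreShift_ne_zero hp)).2 hz), hxz, hz_lt⟩
  calc p.roots.card = ∑ x ∈ s, p.rootMultiplicity x := by
        simp_rw [← count_roots]
        exact (Multiset.sum_count_eq_card fun _ h =>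
          Finset.mem_insert_of_mem (Multiset.mem_toFinset.2 h)).symm
    _ < ∑ x ∈ s, (q.rootMultiplicity x + 1) :=
        Finset.sum_lt_sum
          (fun x _ => rootMultiplicity_le_rootMultiplicity_laguerreShift_add_one hp x)
          ⟨0, Finset.mem_insert_self _ _,
            Nat.lt_succ_of_le (rootMultiplicity_zero_le_rootMultiplicity_laguerreShift hp)⟩
    _ = ∑ x ∈ s, q.roots.count x + s.card := by
        rw [Finset.sum_add_distrib, Finset.card_eq_sum_ones]
        simp_rw [count_roots]
    _ ≤ ∑ x ∈ s, q.roots.count x + (q.roots.toFinset \ s).card := Nat.add_le_add_left hnew _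
    _ ≤ q.roots.card := Multiset.sum_count_add_card_toFinset_sdiff_le _ _
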